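/- Suppose G is a torsion-free abelian group containing no subgroup isomorphic to ℚ. The following are equivalent: (1) there exists an injective additive group homomorphism h : (ℕ → ℤ) →+ G; (2) there exists a sequence c : ℕ → G such that: (A) for every a ∈ S* there exists y ∈ G with φ_a(y; c); (B) for all a¹, a² ∈ S* there exist y₁, y₂, y₃ ∈ G with φ_{a¹}(y₁; c), φ_{a²}(y₂; c), φ_{a¹-a²}(y₃; c), and y₃ = y₁ - y₂; (C) for every m ∈ ℕ, the elements c(0), ..., c(m-1) are linearly independent over ℤ (if integers k_0, ..., k_{m-1} satisfy Σ_{l<m} k_l • c(l) = 0 then all k_l = 0); (D) for every a ∈ S* with a ≠ 0, there exists y ∈ G with y ≠ 0 and φ_a(y; c). -/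

import Mathlib

/-- A group `G` is torsion-free: `n • x ≠ 0` for every `x ≠ 0` and integer `n > 0`. -/
def IsTorsionFreeGroup (G : Type*) [AddCommGroup G] : Prop :=
  ∀ x : G, x ≠ 0 → ∀ n : ℤ, 0 < n → n • x ≠ 0

/-- `G` contains a subgroup isomorphic to `A`. -/
def ContainsCopy (A G : Type*) [AddCommGroup A] [AddCommGroup G] : Prop :=
  ∃ f : A →+ G, Function.Injective f

/-- `S* = {a : ℕ → ℤ | ∀ n, n! ∣ a n}`. -/
def Sstar : Set (ℕ → ℤ) := {a | ∀ n : ℕ, (n.factorial : ℤ) ∣ a n}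

/-- The formula `φ_a(y; c)`: for every `n`, `n!` divides `y - Σ_{l<n} a l • c l` in `G`. -/
def PhiFormula {G : Type*} [AddCommGroup G] (a : ℕ → ℤ) (c : ℕ → G) (y : G) : Prop :=
  ∀ n : ℕ, ∃ z : G, (n.factorial : ℤ) • z = y - ∑ l ∈ Finset.range n, a l • c l

/-!
If `h` embeds `ℕ → ℤ`, take `c l = h eₗ`: for `a ∈ S*` the tail `a - Σ_{l<n} a l • eₗ` is
divisible by `n!` in `ℕ → ℤ`, so `φ_a(h a; c)` holds, and (A)-(D) follow from injectivity of `h`.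

Conversely, in a torsion-free group without a copy of `ℚ` no nonzero `x` is divisible by every
`n!`: otherwise the unique quotients `x / d` give an embedding `p / q ↦ p • (x / q)` of `ℚ`.
Hence `φ_a(y; c)` has at most one solution `y`, so by (A) it defines an additive map on `S*`,
which is `ℕ → ℤ` via `b ↦ (n ↦ n! * b n)`; by (D) this map is injective.
-/

open Finset
open scoped Nat

lemma IsTorsionFreeGroup.isAddTorsionFree {G : Type*} [AddCommGroup G]
    (hG : IsTorsionFreeGroup G) : IsAddTorsionFree G where
  nsmul_right_injective n hn a b hab := by
    by_contra hne
    refine hG (a - b) (sub_ne_zero.2 hne) n (by omega) ?_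
    rw [natCast_zsmul, nsmul_sub]
    exact sub_eq_zero.2 hab

section TorsionFree

variable {G : Type*} [AddCommGroup G] [IsAddTorsionFree G]

lemma containsCopy_rat_of_forall_dvd {x : G} (hx : x ≠ 0)
    (hdvd : ∀ d : ℕ, 0 < d → ∃ w : G, (d : ℤ) • w = x) : ContainsCopy ℚ G := by
  choose! w hw using hdvd
  set F : ℚ → G := fun q => q.num • w q.den
  have hF : ∀ (q : ℚ) (m n : ℤ), n ≠ 0 → (m : ℚ) = q * n → n • F q = m • x := by
    intro q m n hn hm
    have hmn : m * q.den = q.num * n := by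
      have : (m : ℚ) * q.den = q.num * n := by rw [hm, mul_right_comm, Rat.mul_den_eq_num]
      exact_mod_cast this
    rw [← zsmul_right_inj (Int.natCast_ne_zero.2 q.den_nz)]
    linear_combination (norm := module) (n * q.num) • hw q.den q.pos - hmn • x
  have hF_den (q : ℚ) : (q.den : ℤ) • F q = q.num • x :=
    hF q q.num q.den (Int.natCast_ne_zero.2 q.den_nz) (by simp [Rat.mul_den_eq_num])
  have hF_add (q r : ℚ) : F (q + r) = F q + F r := by
    have hn : (q.den * r.den : ℤ) ≠ 0 := by simp [q.den_nz, r.den_nz]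
    have hq : ((q.num * r.den : ℤ) : ℚ) = q * (q.den * r.den : ℤ) := by
      push_cast; rw [← mul_assoc, Rat.mul_den_eq_num]
    have hr : ((r.num * q.den : ℤ) : ℚ) = r * (q.den * r.den : ℤ) := by
      push_cast; rw [mul_left_comm, Rat.mul_den_eq_num, mul_comm]
    rw [← zsmul_right_inj hn, smul_add, hF q _ _ hn hq, hF r _ _ hn hr,
      hF (q + r) (q.num * r.den + r.num * q.den) _ hn (by rw [Int.cast_add, hq, hr, add_mul]),
      add_smul]
  refine ⟨AddMonoidHom.mk' F hF_add, (injective_iff_map_eq_zero _).2 fun q hq => ?_⟩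
  have := hF_den q
  rw [AddMonoidHom.mk'_apply] at hq
  rw [hq, smul_zero, eq_comm,
    IsAddTorsionFree.zsmul_eq_zero_iff_left hx] at this
  exact Rat.num_eq_zero.1 this

lemma eq_zero_of_forall_factorial_dvd (hQ : ¬ ContainsCopy ℚ G) {x : G}
    (hx : ∀ n : ℕ, ∃ z : G, (n ! : ℤ) • z = x) : x = 0 := by
  by_contra hx0
  refine hQ (containsCopy_rat_of_forall_dvd hx0 fun d hd => ?_)
  obtain ⟨z, hz⟩ := hx d
  obtain ⟨k, hk⟩ := Nat.dvd_factorial hd le_rfl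
  exact ⟨(k : ℤ) • z, by rw [smul_smul, ← hz, hk, Nat.cast_mul]⟩

end TorsionFree

section PhiFormula

variable {G : Type*} [AddCommGroup G] {c : ℕ → G}

lemma PhiFormula.add {a b : ℕ → ℤ} {y y' : G} (hy : PhiFormula a c y) (hy' : PhiFormula b c y') :
    PhiFormula (a + b) c (y + y') := fun n => by
  obtain ⟨z, hz⟩ := hy n
  obtain ⟨z', hz'⟩ := hy' n
  refine ⟨z + z', ?_⟩
  simp only [smul_add, hz, hz', Pi.add_apply, add_smul, sum_add_distrib]
  abel

lemma PhiFormula.unique [IsAddTorsionFree G] (hQ : ¬ ContainsCopy ℚ G) {a : ℕ → ℤ} {y y' : G}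
    (hy : PhiFormula a c y) (hy' : PhiFormula a c y') : y = y' := by
  refine sub_eq_zero.1 (eq_zero_of_forall_factorial_dvd hQ fun n => ?_)
  obtain ⟨z, hz⟩ := hy n
  obtain ⟨z', hz'⟩ := hy' n
  exact ⟨z - z', by rw [smul_sub, hz, hz', sub_sub_sub_cancel_right]⟩

end PhiFormula

lemma sum_range_smul_single_apply (k : ℕ → ℤ) (m l : ℕ) :
    (∑ j ∈ range m, k j • Pi.single j (1 : ℤ)) l = if l < m then k l else 0 := by
  simp [Finset.sum_apply, Pi.single_apply]

lemma Sstar.exists_factorial_smul_eq_sub_sum {a : ℕ → ℤ} (ha : a ∈ Sstar) (n : ℕ) :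
    ∃ b : ℕ → ℤ, (n ! : ℤ) • b = a - ∑ l ∈ range n, a l • Pi.single l 1 := by
  refine ⟨fun m => if m < n then 0 else a m / n !, funext fun m => ?_⟩
  simp only [Pi.smul_apply, Pi.sub_apply, sum_range_smul_single_apply, smul_eq_mul]
  split_ifs with hm
  · simp
  · rw [sub_zero, Int.mul_ediv_cancel' ((Int.natCast_dvd_natCast.2
      (Nat.factorial_dvd_factorial (not_lt.1 hm))).trans (ha m))]

def factorialScale : (ℕ → ℤ) →+ (ℕ → ℤ) :=
  AddMonoidHom.mk' (fun b n => n ! * b n) fun b b' => funext fun n => mul_add _ (b n) (b' n)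

lemma factorialScale_mem_Sstar (b : ℕ → ℤ) : factorialScale b ∈ Sstar :=
  fun n => dvd_mul_right _ (b n)

lemma factorialScale_injective : Function.Injective factorialScale := by
  refine (injective_iff_map_eq_zero _).2 fun b hb => funext fun n => ?_
  exact (mul_eq_zero.1 (congrFun hb n)).resolve_left (by positivity)

section Embedding

variable {G : Type*} [AddCommGroup G]

lemma phiFormula_map_single (h : (ℕ → ℤ) →+ G) {a : ℕ → ℤ} (ha : a ∈ Sstar) :
    PhiFormula a (fun l => h (Pi.single l 1)) (h a) := fun n => by
  obtain ⟨b, hb⟩ := Sstar.exists_factorial_smul_eq_sub_sum ha n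
  exact ⟨h b, by simp only [← map_zsmul, hb, map_sub, map_sum]⟩

lemma exists_injective_of_phiFormula [IsAddTorsionFree G] (hQ : ¬ ContainsCopy ℚ G) {c : ℕ → G}
    (hA : ∀ a ∈ Sstar, ∃ y : G, PhiFormula a c y)
    (hD : ∀ a ∈ Sstar, a ≠ 0 → ∃ y : G, y ≠ 0 ∧ PhiFormula a c y) :
    ∃ h : (ℕ → ℤ) →+ G, Function.Injective h := by
  choose y hy using fun b => hA (factorialScale b) (factorialScale_mem_Sstar b)
  have hy_add (b b' : ℕ → ℤ) : y (b + b') = y b + y b' :=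
    (hy (b + b')).unique hQ (by rw [map_add]; exact (hy b).add (hy b'))
  refine ⟨AddMonoidHom.mk' y hy_add, (injective_iff_map_eq_zero _).2 fun b hb => ?_⟩
  by_contra hb0
  obtain ⟨y', hy'0, hy'⟩ := hD _ (factorialScale_mem_Sstar b)
    ((map_ne_zero_iff _ factorialScale_injective).2 hb0)
  exact hy'0 ((hy'.unique hQ (hy b)).trans hb)

end Embedding

/-- A torsion-free group with no copy of `ℚ` embeds the Baer-Specker group iff
it has a sequence satisfying conditions (A)-(D) of `φ*`. -/
theorem specker_embeds_iff (G : Type*) [AddCommGroup G]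
    (hG : IsTorsionFreeGroup G) (hQ : ¬ ContainsCopy ℚ G) :
    (∃ h : (ℕ → ℤ) →+ G, Function.Injective h) ↔
    ∃ c : ℕ → G,
      (∀ a ∈ Sstar, ∃ y : G, PhiFormula a c y) ∧
      (∀ a₁ ∈ Sstar, ∀ a₂ ∈ Sstar, ∃ y₁ y₂ y₃ : G,
        PhiFormula a₁ c y₁ ∧ PhiFormula a₂ c y₂ ∧
        PhiFormula (a₁ - a₂) c y₃ ∧ y₃ = y₁ - y₂) ∧
      (∀ (m : ℕ) (k : ℕ → ℤ),
        (∑ l ∈ Finset.range m, k l • c l) = 0 → ∀ l < m, k l = 0) ∧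
      (∀ a ∈ Sstar, a ≠ 0 → ∃ y : G, y ≠ 0 ∧ PhiFormula a c y) := by
  have := hG.isAddTorsionFree
  constructor
  · rintro ⟨h, hinj⟩
    refine ⟨fun l => h (Pi.single l 1), fun a ha => ⟨h a, phiFormula_map_single h ha⟩,
      fun a₁ ha₁ a₂ ha₂ => ⟨h a₁, h a₂, h (a₁ - a₂), phiFormula_map_single h ha₁,
        phiFormula_map_single h ha₂, phiFormula_map_single h fun n => dvd_sub (ha₁ n) (ha₂ n),
        map_sub h a₁ a₂⟩,
      fun m k hk l hl => ?_,
      fun a ha ha0 => ⟨h a, (map_ne_zero_iff h hinj).2 ha0, phiFormula_map_single h ha⟩⟩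
    simp only [← map_zsmul, ← map_sum, map_eq_zero_iff h hinj] at hk
    simpa only [sum_range_smul_single_apply, hl, if_true, Pi.zero_apply] using congrFun hk l
  · rintro ⟨c, hA, -, -, hD⟩
    exact exists_injective_of_phiFormula hQ hA hD
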